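/- arXiv:2006.15361 — 4 statements merged into one kernel-verified Lean document; each statement's English description precedes it below -/
import Mathlib

section
/- Let k, s ≥ 0 with k ≥ 1, let A = (a_{ij}) ∈ M_k(ℝ) and B = (b_{ij}) ∈ M_{k+s}(ℝ) with block decomposition B = (B₁ B₂; B₃ B₄) where B₁ ∈ M_k(ℝ) and B₄ ∈ M_s(ℝ) (with the convention det(B₄) = 1 when s = 0), and suppose |a_{ij}|, |b_{ij}| ≤ N for some N > 1. Then for every real x > 0, | det( (A 0; 0 0)·x + B ) − det(A)·det(B₄)·x^k | ≤ N^{k+s} · Σ_{l=0}^{k−1} [ k!/((k−l)!·l!) · (k!·(k+s−l)!)/(k−l)! ] · x^l, where (A 0; 0 0) ∈ M_{k+s}(ℝ) is the block matrix with A in the top-left k×k block and zeros elsewhere. -/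
/-!
Expand `det (M + B)`, `M = (x • A 0; 0 0)`, multilinearly in the rows: it is the sum over row
sets `t` of the determinants taking the rows in `t` from `M` and the others from `B`. As `M`
vanishes outside the first `k` rows, only `t ⊆ {0, …, k-1}` contribute, and the full set gives
the block triangular matrix `(x • A 0; B₃ B₄)`, whose determinant is the leading term. For
`#t = l < k` a permutation contributes to the Leibniz expansion only if it sends `t` into the
first `k` columns, where `M` is supported; there are at most `k!/(k-l)! · (k+s-l)!` such
permutations, each contributing at most `(N x)^l N^(k+s-l)`, and there are `k.choose l` sets `t`.
-/

open Finset

namespace Equiv.Perm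

variable {α : Type*} [Fintype α] [DecidableEq α]

theorem card_filter_forall_apply_eq_self (t : Finset α) :
    #{τ : Perm α | ∀ j ∈ t, τ j = j} = (Fintype.card α - #t).factorial := by
  have e : Perm {a // a ∉ t} ≃ {τ : Perm α // ∀ j ∈ t, τ j = j} :=
    (Equiv.Perm.subtypeEquivSubtypePerm (· ∉ t)).trans
      (subtypeEquivRight fun τ => by simp only [not_not])
  rw [← Fintype.card_subtype, ← Fintype.card_congr e, Fintype.card_perm,
    Fintype.card_subtype_compl, Fintype.card_coe]

theorem card_filter_forall_apply_eq (σ₀ : Perm α) (t : Finset α) :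
    #{σ : Perm α | ∀ j ∈ t, σ j = σ₀ j} = (Fintype.card α - #t).factorial := by
  rw [← card_filter_forall_apply_eq_self t]
  refine card_equiv (Equiv.mulLeft σ₀⁻¹) fun σ => ?_
  simp [Perm.mul_apply, Equiv.eq_symm_apply, eq_comm]

/-- Counted through the restriction `t ↪ L`, whose fibres are cosets of the pointwise
stabiliser of `t`. -/
theorem card_filter_forall_apply_mem_le (t L : Finset α) :
    #{σ : Perm α | ∀ j ∈ t, σ j ∈ L} ≤
      (#L).descFactorial #t * (Fintype.card α - #t).factorial := by
  set Q : Finset (Perm α) := {σ | ∀ j ∈ t, σ j ∈ L}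
  let restrict (σ : Perm α) : t → α := fun j => σ j
  let coeFn : (t ↪ L) ↪ (t → α) :=
    ⟨fun e j => e j, fun e e' h => by ext j; exact congrFun h j⟩
  have hmaps : ∀ σ ∈ Q, restrict σ ∈ (univ : Finset (t ↪ L)).map coeFn := by
    intro σ hσ
    simp only [Q, mem_filter, mem_univ, true_and] at hσ
    let e : t ↪ L := ⟨fun j => ⟨σ j, hσ j j.2⟩, fun j j' h =>
      Subtype.ext (σ.injective (congrArg Subtype.val h))⟩
    exact mem_map_of_mem coeFn (mem_univ e)
  have hfiber : ∀ g ∈ (univ : Finset (t ↪ L)).map coeFn,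
      #{σ ∈ Q | restrict σ = g} ≤ (Fintype.card α - #t).factorial := by
    intro g _
    obtain h | ⟨σ₀, hσ₀⟩ := eq_empty_or_nonempty {σ ∈ Q | restrict σ = g}
    · simp [h]
    rw [← card_filter_forall_apply_eq σ₀ t]
    refine card_le_card fun σ hσ => ?_
    simp only [mem_filter, mem_univ, true_and] at hσ hσ₀ ⊢
    exact fun j hj => congrFun (hσ.2.trans hσ₀.2.symm) ⟨j, hj⟩
  calc #Q ≤ (Fintype.card α - #t).factorial * #((univ : Finset (t ↪ L)).map coeFn) :=
        card_le_mul_card_image_of_maps_to hmaps _ hfiber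
    _ = _ := by
        rw [card_map, card_univ, Fintype.card_embedding_eq, Fintype.card_coe, Fintype.card_coe,
          mul_comm]

end Equiv.Perm

namespace Matrix

variable {ι m n R : Type*} [Fintype ι] [DecidableEq ι]

def piecewiseRows [DecidableEq m] (t : Finset m) (M N : Matrix m n R) : Matrix m n R :=
  of fun i => if i ∈ t then M i else N i

@[simp] theorem piecewiseRows_apply [DecidableEq m] (t : Finset m) (M N : Matrix m n R)
    (i : m) (j : n) :
    piecewiseRows t M N i j = if i ∈ t then M i j else N i j := by
  simp only [piecewiseRows, of_apply]; split_ifs <;> rfl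

theorem det_add_eq_sum_powerset_piecewiseRows [CommRing R] (M N : Matrix ι ι R) {L : Finset ι}
    (hM : ∀ i ∉ L, M i = 0) :
    det (M + N) = ∑ t ∈ L.powerset, det (piecewiseRows t M N) := by
  calc det (M + N) = ∑ t, det (piecewiseRows t M N) := detRowAlternating.map_add_univ M N
    _ = _ := (sum_subset (subset_univ _) fun t _ ht => ?_).symm
  obtain ⟨i, hit, hiL⟩ := not_subset.mp (mt mem_powerset.mpr ht)
  exact det_eq_zero_of_row_eq_zero i fun j => by simp [hit, hM i hiL]

theorem abs_det_piecewiseRows_le [CommRing R] [LinearOrder R] [IsStrictOrderedRing R]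
    {M N : Matrix ι ι R} {L : Finset ι} (hM : ∀ i, ∀ j ∉ L, M i j = 0) {a b : R}
    (ha : ∀ i j, |M i j| ≤ a) (hb : ∀ i j, |N i j| ≤ b) (t : Finset ι) :
    |det (piecewiseRows t M N)| ≤
      #{σ : Equiv.Perm ι | ∀ i ∈ t, σ i ∈ L} * (a ^ #t * b ^ (Fintype.card ι - #t)) := by
  have hterm : ∀ σ : Equiv.Perm ι, ∏ i, |piecewiseRows t M N i (σ i)| ≤
      if ∀ i ∈ t, σ i ∈ L then a ^ #t * b ^ (Fintype.card ι - #t) else 0 := by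
    intro σ
    split_ifs with hσ
    · rw [← prod_mul_prod_compl t, ← card_compl, ← prod_const, ← prod_const]
      refine mul_le_mul (prod_le_prod (fun _ _ => abs_nonneg _) fun i hi => ?_)
        (prod_le_prod (fun _ _ => abs_nonneg _) fun i hi => ?_)
        (prod_nonneg fun _ _ => abs_nonneg _)
        (prod_nonneg fun i _ => (abs_nonneg _).trans (ha i i))
      · simpa [hi] using ha i (σ i)
      · simpa [mem_compl.mp hi] using hb i (σ i)
    · push Not at hσ
      obtain ⟨i, hit, hiL⟩ := hσ
      exact (prod_eq_zero (mem_univ i) (by simp [hit, hM i _ hiL])).le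
  rw [← det_transpose, det_apply]
  calc _ ≤ ∑ σ : Equiv.Perm ι, ∏ i, |piecewiseRows t M N i (σ i)| := by
        refine (abs_sum_le_sum_abs _ _).trans_eq (sum_congr rfl fun σ _ => ?_)
        rw [Units.smul_def, zsmul_eq_mul, abs_mul, abs_unit_intCast, one_mul, abs_prod]
        rfl
    _ ≤ _ := (sum_le_sum fun σ _ => hterm σ).trans_eq <| by
        rw [← sum_filter, sum_const, nsmul_eq_mul]

theorem abs_det_fromBlocks_add_sub_le [Fintype m] [Fintype n] [DecidableEq m] [DecidableEq n]
    [CommRing R] [LinearOrder R] [IsStrictOrderedRing R]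
    (A : Matrix m m R) (B : Matrix (m ⊕ n) (m ⊕ n) R) {a b : R}
    (ha₀ : 0 ≤ a) (hb₀ : 0 ≤ b) (ha : ∀ i j, |A i j| ≤ a) (hb : ∀ i j, |B i j| ≤ b) :
    |det (fromBlocks A 0 0 0 + B) - det A * det B.toBlocks₂₂| ≤
      ∑ l ∈ range (Fintype.card m),
        ((Fintype.card m).choose l * (Fintype.card m).descFactorial l *
          (Fintype.card m + Fintype.card n - l).factorial : ℕ) *
          (a ^ l * b ^ (Fintype.card m + Fintype.card n - l)) := by
  set M : Matrix (m ⊕ n) (m ⊕ n) R := fromBlocks A 0 0 0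
  set L : Finset (m ⊕ n) := univ.map .inl
  have hrow : ∀ i ∉ L, M i = 0 := by
    rintro (i | i) hi
    · simp [L] at hi
    · ext (j | j) <;> simp [M]
  have hcol : ∀ i, ∀ j ∉ L, M i j = 0 := by
    rintro (i | i) (j | j) hj <;> simp_all [M, L]
  have hMa : ∀ i j, |M i j| ≤ a := by
    rintro (i | i) (j | j) <;> simp [M, ha, ha₀]
  have htop : det (piecewiseRows L M B) = det A * det B.toBlocks₂₂ := by
    rw [← det_fromBlocks_zero₁₂ A B.toBlocks₂₁]
    congr 1
    ext (i | i) (j | j) <;> simp [M, L, toBlocks₂₁, toBlocks₂₂]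
  set g : ℕ → R := fun l => ((Fintype.card m).descFactorial l *
        (Fintype.card m + Fintype.card n - l).factorial : ℕ) *
          (a ^ l * b ^ (Fintype.card m + Fintype.card n - l))
  have hcount : ∑ t ∈ L.powerset.erase L, g #t =
      ∑ l ∈ range (Fintype.card m), (Fintype.card m).choose l • g l := by
    have h := sum_erase_add _ (fun t => g #t) (mem_powerset_self L)
    rw [sum_powerset_apply_card, sum_range_succ, card_map, card_univ, Nat.choose_self, one_smul]
      at h
    exact add_right_cancel h
  rw [det_add_eq_sum_powerset_piecewiseRows M B hrow, ← sum_erase_add _ _ (mem_powerset_self L),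
    htop, add_sub_cancel_right]
  refine (abs_sum_le_sum_abs _ _).trans ((sum_le_sum fun t _ => ?_).trans_eq (hcount.trans ?_))
  · refine (abs_det_piecewiseRows_le hcol hMa hb t).trans ?_
    have hQ := Equiv.Perm.card_filter_forall_apply_mem_le t L
    rw [card_map, card_univ, Fintype.card_sum] at hQ
    rw [Fintype.card_sum]
    exact mul_le_mul_of_nonneg_right (by exact_mod_cast hQ) (by positivity)
  · refine sum_congr rfl fun l _ => ?_
    simp only [g, nsmul_eq_mul]
    push_cast
    ring

end Matrix

theorem abs_det_block_sub_leading_le_general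
    (k s : ℕ) (N : ℝ) (hN : 1 < N)
    (A : Matrix (Fin k) (Fin k) ℝ) (B : Matrix (Fin (k + s)) (Fin (k + s)) ℝ)
    (hA : ∀ i j, |A i j| ≤ N) (hB : ∀ i j, |B i j| ≤ N)
    (x : ℝ) (hx : 0 < x) :
    |(x • (Matrix.reindex finSumFinEquiv finSumFinEquiv
          (Matrix.fromBlocks A 0 0 0)) + B).det
        - A.det * (B.submatrix (Fin.natAdd k) (Fin.natAdd k)).det * x ^ k|
      ≤ N ^ (k + s) *
        ∑ l ∈ Finset.range k,
          ((k.factorial : ℝ) / ((k - l).factorial * l.factorial)) *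
            ((k.factorial * (k + s - l).factorial : ℝ) / (k - l).factorial) * x ^ l := by
  set e := finSumFinEquiv (m := k) (n := s)
  have hsum : x • Matrix.reindex e e (Matrix.fromBlocks A 0 0 0) + B =
      Matrix.reindex e e (Matrix.fromBlocks (x • A) 0 0 0 + B.submatrix e e) := by
    ext i j
    simp
    rcases e.symm i with i | i <;> rcases e.symm j with j | j <;> simp
  have hB₄ : B.submatrix (Fin.natAdd k) (Fin.natAdd k) = (B.submatrix e e).toBlocks₂₂ := by
    ext i j
    simp [Matrix.toBlocks₂₂, e]
  have hlead : A.det * (B.submatrix (Fin.natAdd k) (Fin.natAdd k)).det * x ^ k =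
      (x • A).det * (B.submatrix e e).toBlocks₂₂.det := by
    rw [Matrix.det_smul, Fintype.card_fin, hB₄]; ring
  have hxA : ∀ i j, |(x • A) i j| ≤ N * x := fun i j => by
    rw [Matrix.smul_apply, smul_eq_mul, abs_mul, abs_of_pos hx, mul_comm]
    exact mul_le_mul_of_nonneg_right (hA i j) hx.le
  rw [hsum, Matrix.det_reindex_self, hlead]
  refine (Matrix.abs_det_fromBlocks_add_sub_le (x • A) (B.submatrix e e) (by positivity)
    (by positivity) hxA fun i j => hB _ _).trans_eq ?_
  rw [Fintype.card_fin, Fintype.card_fin, mul_sum]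
  refine sum_congr rfl fun l hl => ?_
  have hlk : l ≤ k := (mem_range.mp hl).le
  have hfac : ((k - l).factorial : ℝ) * k.descFactorial l = k.factorial := by
    exact_mod_cast Nat.factorial_mul_descFactorial hlk
  have hpow : (N * x) ^ l * N ^ (k + s - l) = N ^ (k + s) * x ^ l := by
    rw [mul_pow, mul_right_comm, ← pow_add, Nat.add_sub_cancel' (hlk.trans (k.le_add_right s))]
  push_cast
  rw [hpow, Nat.cast_choose ℝ hlk, ← hfac]
  field_simp

/-- **Lemma (Statement 3).** Let `A ∈ M_k(ℝ)`, `B ∈ M_{k+s}(ℝ)` with entries bounded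
by `N > 1`, and let `B₄` be the lower-right `s × s` block of `B` (with `det B₄ = 1`
when `s = 0`). Then for every `x > 0`,
`|det((A 0; 0 0)·x + B) - det A · det B₄ · x^k| ≤
  N^{k+s} · Σ_{l<k} [k!/((k-l)!·l!)] · [k!·(k+s-l)!/(k-l)!] · x^l`. -/
theorem abs_det_block_sub_leading_le
    (k s : ℕ) (hk : 1 ≤ k) (N : ℝ) (hN : 1 < N)
    (A : Matrix (Fin k) (Fin k) ℝ) (B : Matrix (Fin (k + s)) (Fin (k + s)) ℝ)
    (hA : ∀ i j, |A i j| ≤ N) (hB : ∀ i j, |B i j| ≤ N)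
    (x : ℝ) (hx : 0 < x) :
    |(x • (Matrix.reindex finSumFinEquiv finSumFinEquiv
          (Matrix.fromBlocks A 0 0 0)) + B).det
        - A.det * (B.submatrix (Fin.natAdd k) (Fin.natAdd k)).det * x ^ k|
      ≤ N ^ (k + s) *
        ∑ l ∈ Finset.range k,
          ((k.factorial : ℝ) / ((k - l).factorial * l.factorial)) *
            ((k.factorial * (k + s - l).factorial : ℝ) / (k - l).factorial) * x ^ l :=
  abs_det_block_sub_leading_le_general k s N hN A B hA hB x hx
end

section
/- Let k, s ≥ 0 with k ≥ 1, let A ∈ M_k(ℝ) and B ∈ M_{k+s}(ℝ) with block decomposition B = (B₁ B₂; B₃ B₄) where B₁ ∈ M_k(ℝ) and B₄ ∈ M_s(ℝ) (with the convention det(B₄) = 1 when s = 0). Then the function x ↦ det( (A 0; 0 0)·x + B ) is a polynomial in x of degree at most k whose coefficient of x^k equals det(A)·det(B₄), where (A 0; 0 0) ∈ M_{k+s}(ℝ) is the block matrix with A in the top-left k×k block and zeros elsewhere. -/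
open Polynomial Matrix Equiv Equiv.Perm Finset

set_option linter.unusedSectionVars false

noncomputable section

namespace DetBlockAux

variable {m n : Type*} [DecidableEq m] [DecidableEq n] [Fintype m] [Fintype n]
variable {α : Type*} [CommRing α]

/-- The polynomial matrix `X • (A 0; 0 0) + B`. -/
def Mx (A : Matrix m m α) (B : Matrix (m ⊕ n) (m ⊕ n) α) : Matrix (m ⊕ n) (m ⊕ n) α[X] :=
  (X : α[X]) • (Matrix.fromBlocks A 0 0 0).map C + B.map C

variable (A : Matrix m m α) (B : Matrix (m ⊕ n) (m ⊕ n) α)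

lemma Mx_inr (j : m ⊕ n) (b : n) : Mx A B j (Sum.inr b) = C (B j (Sum.inr b)) := by
  cases j <;> simp [Mx]

lemma Mx_inr_inl (b : n) (a : m) :
    Mx A B (Sum.inr b) (Sum.inl a) = C (B (Sum.inr b) (Sum.inl a)) := by
  simp [Mx]

lemma Mx_inl_inl (a' a : m) :
    Mx A B (Sum.inl a') (Sum.inl a) = X * C (A a' a) + C (B (Sum.inl a') (Sum.inl a)) := by
  simp [Mx]

lemma natDegree_entry_le (j : m ⊕ n) (a : m) : natDegree (Mx A B j (Sum.inl a)) ≤ 1 := by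
  cases j with
  | inl a' => rw [Mx_inl_inl]; compute_degree
  | inr b => rw [Mx_inr_inl]; simp

lemma natDegree_prod_perm_le (σ : Perm (m ⊕ n)) :
    natDegree (∏ i, Mx A B (σ i) i) ≤ Fintype.card m := by
  refine (natDegree_prod_le _ _).trans ?_
  rw [Fintype.sum_sum_type]
  have h2 : ∀ b : n, natDegree (Mx A B (σ (Sum.inr b)) (Sum.inr b)) = 0 := fun b => by
    rw [Mx_inr]; simp
  simp only [h2, Finset.sum_const_zero, add_zero]
  calc ∑ a : m, natDegree (Mx A B (σ (Sum.inl a)) (Sum.inl a))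
      ≤ ∑ _a : m, 1 := Finset.sum_le_sum fun a _ => natDegree_entry_le A B _ a
    _ = Fintype.card m := by simp

lemma natDegree_prod_perm_lt (σ : Perm (m ⊕ n)) (a : m) (b : n)
    (hab : σ (Sum.inl a) = Sum.inr b) :
    natDegree (∏ i, Mx A B (σ i) i) < Fintype.card m := by
  refine lt_of_le_of_lt (natDegree_prod_le _ _) ?_
  rw [Fintype.sum_sum_type]
  have h2 : ∀ b : n, natDegree (Mx A B (σ (Sum.inr b)) (Sum.inr b)) = 0 := fun b => by
    rw [Mx_inr]; simp
  simp only [h2, Finset.sum_const_zero, add_zero]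
  have hcard : ∑ _a : m, (1 : ℕ) = Fintype.card m := by simp
  rw [← hcard]
  refine Finset.sum_lt_sum (fun i _ => natDegree_entry_le A B _ i) ⟨a, Finset.mem_univ a, ?_⟩
  rw [hab, Mx_inr_inl]
  simp

lemma degree_det_le : degree (det (Mx A B)) ≤ (Fintype.card m : ℕ) := by
  rw [Matrix.det_apply]
  refine (degree_sum_le _ _).trans ?_
  refine Finset.sup_le fun σ _ => ?_
  have h : degree (sign σ • ∏ i, Mx A B (σ i) i) ≤ degree (∏ i, Mx A B (σ i) i) := by
    rcases Int.units_eq_one_or (sign σ) with hs | hs <;>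
      rw [hs] <;> simp [Units.neg_smul, degree_neg]
  refine h.trans ?_
  exact degree_le_natDegree.trans (by exact_mod_cast Nat.cast_le.mpr (natDegree_prod_perm_le A B σ))

lemma key (σ₁ : Perm m) (σ₂ : Perm n) :
    coeff (∏ i, Mx A B ((σ₁.sumCongr σ₂) i) i) (Fintype.card m)
      = (∏ a, A (σ₁ a) a) * ∏ b, B (Sum.inr (σ₂ b)) (Sum.inr b) := by
  rw [Fintype.prod_sum_type]
  simp only [Perm.sumCongr_apply, Sum.map_inl, Sum.map_inr, Mx_inr, Mx_inl_inl]
  rw [← map_prod (C : α →+* α[X]), coeff_mul_C]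
  congr 1
  have h := coeff_prod_of_natDegree_le (s := (Finset.univ : Finset m))
      (fun a : m => X * C (A (σ₁ a) a) + C (B (Sum.inl (σ₁ a)) (Sum.inl a))) 1
      (fun p _ => (natDegree_add_le _ _).trans
        (max_le (natDegree_mul_le.trans (by simp [natDegree_X_le])) (by simp)))
  rw [Finset.card_univ, mul_one] at h
  rw [h]
  refine Finset.prod_congr rfl fun a _ => ?_
  simp [coeff_C]

lemma coeff_det :
    coeff (det (Mx A B)) (Fintype.card m)
      = det A * det (B.submatrix Sum.inr Sum.inr) := by
  classical
  rw [Matrix.det_apply, finset_sum_coeff]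
  simp_rw [coeff_smul]
  convert Eq.symm <|
    Finset.sum_subset
      (Finset.subset_univ (((sumCongrHom m n).range : Set (Perm (m ⊕ n))).toFinset)) ?_
  · rw [Matrix.det_apply', Matrix.det_apply', Finset.sum_mul_sum, ← Finset.sum_product',
      Finset.univ_product_univ]
    refine Finset.sum_nbij (fun σ₁₂ => σ₁₂.1.sumCongr σ₁₂.2) ?_ ?_ ?_ ?_
    · intro σ₁₂ _
      erw [Set.mem_toFinset, MonoidHom.mem_range]
      exact ⟨σ₁₂, rfl⟩
    · intro σ₁ _ σ₂ _ h
      have h2 : ∀ x, Perm.sumCongr σ₁.fst σ₁.snd x = Perm.sumCongr σ₂.fst σ₂.snd x :=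
        DFunLike.congr_fun h
      simp only [Sum.map_inr, Sum.map_inl, Perm.sumCongr_apply, Sum.forall, Sum.inl.injEq,
        Sum.inr.injEq] at h2
      ext x
      · exact h2.left x
      · exact h2.right x
    · intro σ hσ
      erw [Set.mem_toFinset, MonoidHom.mem_range] at hσ
      obtain ⟨σ₁₂, hσ₁₂⟩ := hσ
      exact ⟨σ₁₂, Finset.mem_univ _, by rw [← hσ₁₂]; simp⟩
    · intro σ₁₂ _
      rw [key A B σ₁₂.1 σ₁₂.2]
      rw [sign_sumCongr, Units.smul_def, Units.val_mul, zsmul_eq_mul, Int.cast_mul]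
      simp only [Matrix.submatrix_apply]
      ring
  · rintro σ - hσn
    have h1 : ¬∀ x, ∃ y, Sum.inl y = σ (Sum.inl x) := by
      rw [Set.mem_toFinset] at hσn
      simpa only [Set.MapsTo, Set.mem_range, forall_exists_index, forall_apply_eq_imp_iff] using
        mt mem_sumCongrHom_range_of_perm_mapsTo_inl hσn
    obtain ⟨a, ha⟩ := not_forall.mp h1
    cases hx : σ (Sum.inl a) with
    | inl a2 => exact absurd hx.symm ((not_exists.mp ha) a2)
    | inr b =>
      rw [coeff_eq_zero_of_natDegree_lt (natDegree_prod_perm_lt A B σ a b hx), smul_zero]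

end DetBlockAux

/-- **Lemma (Statement 5).** Let `A ∈ M_k(ℝ)`, `B ∈ M_{k+s}(ℝ)`, and let `B₄` be the
lower-right `s × s` block of `B` (with `det B₄ = 1` when `s = 0`). Then
`x ↦ det((A 0; 0 0)·x + B)` is a polynomial in `x` of degree at most `k` whose
coefficient of `x^k` equals `det A · det B₄`. -/
theorem det_block_is_polynomial
    (k s : ℕ) (hk : 1 ≤ k)
    (A : Matrix (Fin k) (Fin k) ℝ) (B : Matrix (Fin (k + s)) (Fin (k + s)) ℝ) :
    ∃ p : Polynomial ℝ, p.degree ≤ (k : ℕ) ∧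
      p.coeff k = A.det * (B.submatrix (Fin.natAdd k) (Fin.natAdd k)).det ∧
      ∀ x : ℝ, p.eval x
        = (x • (Matrix.reindex finSumFinEquiv finSumFinEquiv
            (Matrix.fromBlocks A 0 0 0)) + B).det := by
  classical
  have hB4 : (B.submatrix finSumFinEquiv finSumFinEquiv).submatrix Sum.inr Sum.inr
      = B.submatrix (Fin.natAdd k) (Fin.natAdd k) := by
    ext i j
    simp only [Matrix.submatrix_apply, finSumFinEquiv_apply_right]
  refine ⟨(DetBlockAux.Mx A (B.submatrix finSumFinEquiv finSumFinEquiv)).det, ?_, ?_, ?_⟩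
  · simpa using DetBlockAux.degree_det_le A (B.submatrix finSumFinEquiv finSumFinEquiv)
  · have h := DetBlockAux.coeff_det A (B.submatrix finSumFinEquiv finSumFinEquiv)
    rw [Fintype.card_fin] at h
    rw [h, hB4]
  · intro x
    have hmap : (DetBlockAux.Mx A (B.submatrix finSumFinEquiv finSumFinEquiv)).map
          (Polynomial.evalRingHom x)
        = x • Matrix.fromBlocks A 0 0 0 + B.submatrix finSumFinEquiv finSumFinEquiv := by
      ext i j
      simp only [DetBlockAux.Mx, Matrix.map_apply, Matrix.add_apply, Matrix.smul_apply,
        smul_eq_mul, Polynomial.eval_add, Polynomial.eval_mul, Polynomial.eval_X,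
        Polynomial.eval_C, Polynomial.coe_evalRingHom]
    have hsub : (x • (Matrix.reindex finSumFinEquiv finSumFinEquiv (Matrix.fromBlocks A 0 0 0))
          + B).submatrix finSumFinEquiv finSumFinEquiv
        = x • Matrix.fromBlocks A 0 0 0 + B.submatrix finSumFinEquiv finSumFinEquiv := by
      ext i j
      simp only [Matrix.submatrix_apply, Matrix.add_apply, Matrix.smul_apply,
        Matrix.reindex_apply, Equiv.symm_apply_apply]
    have h1 : Polynomial.eval x (DetBlockAux.Mx A
          (B.submatrix finSumFinEquiv finSumFinEquiv)).det
        = ((DetBlockAux.Mx A (B.submatrix finSumFinEquiv finSumFinEquiv)).map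
            (Polynomial.evalRingHom x)).det := by
      rw [show Polynomial.eval x (DetBlockAux.Mx A
            (B.submatrix finSumFinEquiv finSumFinEquiv)).det
          = (Polynomial.evalRingHom x)
            (DetBlockAux.Mx A (B.submatrix finSumFinEquiv finSumFinEquiv)).det from rfl,
        RingHom.map_det, RingHom.mapMatrix_apply]
    have h2 := Matrix.det_submatrix_equiv_self finSumFinEquiv
      (x • (Matrix.reindex finSumFinEquiv finSumFinEquiv (Matrix.fromBlocks A 0 0 0)) + B)
    rw [hsub] at h2
    rw [h1, hmap, ← h2]

end
end

section
/- Let d be a squarefree positive integer with d > 1 and F = ℚ(√d). If α ∈ 𝒪_F is totally positive and α ∉ ℤ, then tr(α) ≥ √(Δ_d), where tr denotes the field trace of F/ℚ. -/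
noncomputable section

/-- `Δ_d`: the discriminant of `ℚ(√d)` for squarefree `d > 1`. -/
def Delta (d : ℕ) : ℕ := if d % 4 = 1 then d else 4 * d

/-- `ω_d`, viewed as a real number (with `√d > 0`). -/
def omegaR (d : ℕ) : ℝ := if d % 4 = 1 then (1 + Real.sqrt d) / 2 else Real.sqrt d

/-- The conjugate `ω̄_d`, viewed as a real number. -/
def omegaConjR (d : ℕ) : ℝ := if d % 4 = 1 then (1 - Real.sqrt d) / 2 else -Real.sqrt d

/-- `F = ℚ(√d)`, realized as an intermediate field of `ℝ/ℚ` via the embedding with `√d > 0`. -/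
def Fd (d : ℕ) : IntermediateField ℚ ℝ := IntermediateField.adjoin ℚ {Real.sqrt d}

/-- The ring of integers `𝒪_F` of `F = ℚ(√d)`. -/
abbrev Od (d : ℕ) := NumberField.RingOfIntegers (Fd d)

/-- An element of `F` is totally positive if its image under each of the
(two) real embeddings of `F` is positive. -/
def TotPos {d : ℕ} (x : Fd d) : Prop := ∀ σ : Fd d →ₐ[ℚ] ℝ, 0 < σ x

/-- The conjugate `x̄` of `x ∈ F = ℚ(√d)`, as a real number: `x̄ = tr(x) - x`. -/
def conjR {d : ℕ} (x : Fd d) : ℝ := ((Algebra.trace ℚ (Fd d) x : ℚ) : ℝ) - (x : ℝ)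

/-- A (not necessarily classic) quadratic `𝒪_F`-lattice: a finitely generated
`𝒪_F`-module `L` with a quadratic map `Q : L → 𝒪_F` whose associated form
`B(x,y) = (Q(x+y)-Q(x)-Q(y))/2` (with values a priori in `F`) is symmetric
bilinear and satisfies `B(x,x) = Q(x)`. -/
structure QuadLattice (d : ℕ) where
  carrier : Type
  [isAddCommGroup : AddCommGroup carrier]
  [isModule : Module (Od d) carrier]
  finite : Module.Finite (Od d) carrier
  Q : carrier → Od d
  B : carrier → carrier → Fd d
  B_symm : ∀ x y, B x y = B y x
  B_add_left : ∀ x y z, B (x + y) z = B x z + B y z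
  B_smul_left : ∀ (a : Od d) (x y : carrier), B (a • x) y = (a : Fd d) * B x y
  B_self : ∀ x, B x x = (Q x : Fd d)
  B_def : ∀ x y, 2 * B x y = (Q (x + y) : Fd d) - (Q x : Fd d) - (Q y : Fd d)

attribute [instance] QuadLattice.isAddCommGroup QuadLattice.isModule

namespace QuadLattice

variable {d : ℕ} (L : QuadLattice d)

/-- `L` is classic if the bilinear form takes values in `𝒪_F`. -/
def IsClassic : Prop := ∀ x y, L.B x y ∈ integralClosure ℤ (Fd d)

/-- `L` is positive definite if `Q(x)` is totally positive for all `x ≠ 0`. -/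
def PosDef : Prop := ∀ x : L.carrier, x ≠ 0 → TotPos (L.Q x : Fd d)

/-- `L` is universal if `Q(L) = 𝒪_F⁺ ∪ {0}`. -/
def Universal : Prop :=
  (Set.range fun v => L.Q v) = {a : Od d | TotPos (a : Fd d)} ∪ {0}

end QuadLattice

/-! Write `α = p + q√d` with `p, q ∈ ℚ`. Integrality makes `a = tr α = 2p` and the norm
`m = p² - q²d` integers, so `d (2q)² = a² - 4m ∈ ℤ` and, `d` being squarefree, `b = 2q ∈ ℤ`,
with `b ≠ 0` because `α ∉ ℤ`. Both conjugates `p ± q√d` are positive, so `a > 0` and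
`a² - b²d = 4m > 0`. If `d ≢ 1 (mod 4)`, reducing `a² = 4m + b²d` modulo `4` forces `b` to be
even, whence `a² ≥ 4d`; otherwise `a² ≥ d` already. -/

open Polynomial IntermediateField

theorem Nat.not_isSquare_of_squarefree {n : ℕ} (hn : Squarefree n) (h1 : 1 < n) :
    ¬ IsSquare n := by
  rintro ⟨k, rfl⟩
  have := Nat.isUnit_iff.mp (hn k dvd_rfl)
  subst this
  omega

theorem Rat.exists_intCast_eq_of_mul_sq_eq_intCast {d : ℤ} (hd : Squarefree d) {r : ℚ} {k : ℤ}
    (h : d * r ^ 2 = k) : ∃ n : ℤ, r = n := by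
  have hkey : r.num ^ 2 * d = k * (r.den : ℤ) ^ 2 := by
    have : (r.num : ℚ) ^ 2 * d = k * (r.den : ℚ) ^ 2 := by
      rw [← Rat.mul_den_eq_num, ← h]; ring
    exact_mod_cast this
  have hden : (r.den : ℤ) ^ 2 ∣ d :=
    (Rat.isCoprime_num_den r).symm.pow.dvd_of_dvd_mul_left ⟨k, by rw [hkey]; ring⟩
  have : r.den = 1 := by
    have := Int.isUnit_iff.mp (hd _ (sq (r.den : ℤ) ▸ hden))
    omega
  exact ⟨r.num, (Rat.coe_int_num_of_den_eq_one this).symm⟩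

theorem exists_intCast_eq_of_isIntegral_algebraMap {K : Type*} [Field K] [CharZero K] {r : ℚ}
    (h : IsIntegral ℤ (algebraMap ℚ K r)) : ∃ n : ℤ, r = n := by
  obtain ⟨n, hn⟩ := IsIntegrallyClosed.isIntegral_iff.mp
    ((isIntegral_algebraMap_iff (algebraMap ℚ K).injective).mp h)
  exact ⟨n, hn.symm⟩

theorem Int.even_of_four_dvd_sq_sub_sq_mul {a b d : ℤ} (hd : d % 4 = 2 ∨ d % 4 = 3)
    (h : 4 ∣ a ^ 2 - b ^ 2 * d) : Even b := by
  by_contra hb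
  obtain ⟨k, rfl⟩ := Int.not_even_iff_odd.mp hb
  obtain ⟨c, hc⟩ := h
  rcases Int.even_or_odd' a with ⟨j, rfl | rfl⟩
  · have : d = 4 * (j ^ 2 - c - (k ^ 2 + k) * d) := by linear_combination -hc
    omega
  · have : d = 4 * (j ^ 2 + j - c - (k ^ 2 + k) * d) + 1 := by linear_combination -hc
    omega

theorem Delta_le_sq {d : ℕ} (hd : Squarefree d) {a b : ℤ} (hb : b ≠ 0)
    (hdvd : 4 ∣ a ^ 2 - b ^ 2 * d) (hle : b ^ 2 * d ≤ a ^ 2) : (Delta d : ℤ) ≤ a ^ 2 := by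
  unfold Delta
  split_ifs
  · have : 0 < b ^ 2 := by positivity
    nlinarith
  · have hd4 : (d : ℤ) % 4 = 2 ∨ (d : ℤ) % 4 = 3 := by
      have : ¬ 4 ∣ d := fun h ↦ by have := Nat.isUnit_iff.mp (hd 2 h); omega
      omega
    obtain ⟨c, rfl⟩ := Int.even_of_four_dvd_sq_sub_sq_mul hd4 hdvd
    have : c ≠ 0 := by rintro rfl; simp at hb
    have : 0 < c ^ 2 := by positivity
    push_cast
    nlinarith

namespace Fd

variable {d : ℕ}

theorem isIntegral_sqrt (d : ℕ) : IsIntegral ℚ (√d : ℝ) :=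
  ⟨X ^ 2 - C (d : ℚ), monic_X_pow_sub_C _ two_ne_zero, by simp⟩

theorem minpoly_sqrt (hd : ¬ IsSquare d) : minpoly ℚ (√d : ℝ) = X ^ 2 - C (d : ℚ) := by
  refine (minpoly.eq_of_irreducible_of_monic (X_pow_sub_C_irreducible_of_prime Nat.prime_two ?_)
    (by simp) (monic_X_pow_sub_C _ two_ne_zero)).symm
  exact fun b hb ↦ hd (Rat.isSquare_natCast_iff.mp ⟨b, by rw [← hb, sq]⟩)

def powerBasis (d : ℕ) : PowerBasis ℚ (Fd d) := adjoin.powerBasis (isIntegral_sqrt d)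

instance : FiniteDimensional ℚ (Fd d) := (powerBasis d).finite

def sqrtGen (d : ℕ) : Fd d := (powerBasis d).gen

@[simp]
theorem coe_sqrtGen : (sqrtGen d : ℝ) = √d := rfl

theorem minpoly_sqrtGen (hd : ¬ IsSquare d) : minpoly ℚ (sqrtGen d) = X ^ 2 - C (d : ℚ) :=
  (minpoly_gen ℚ (√d : ℝ)).trans (minpoly_sqrt hd)

theorem powerBasis_dim (hd : ¬ IsSquare d) : (powerBasis d).dim = 2 := by
  rw [powerBasis, adjoin.powerBasis_dim, minpoly_sqrt hd, natDegree_X_pow_sub_C]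

def mk (p q : ℚ) : Fd d := algebraMap ℚ (Fd d) p + q • sqrtGen d

@[simp]
theorem coe_mk (p q : ℚ) : ((mk p q : Fd d) : ℝ) = p + q * √d := by
  simp [mk, Algebra.smul_def]

theorem mk_zero_right (p : ℚ) : (mk p 0 : Fd d) = algebraMap ℚ (Fd d) p := by
  simp [mk]

theorem exists_mk_eq (hd : ¬ IsSquare d) (x : Fd d) : ∃ p q : ℚ, mk p q = x := by
  obtain ⟨f, hf, rfl⟩ := (powerBasis d).exists_eq_aeval x
  refine ⟨f.coeff 0, f.coeff 1, ?_⟩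
  rw [eq_X_add_C_of_natDegree_le_one (p := f) (by rw [powerBasis_dim hd] at hf; omega)]
  simp [mk, sqrtGen, Algebra.smul_def, add_comm]

theorem trace_mk (hd : ¬ IsSquare d) (p q : ℚ) : Algebra.trace ℚ (Fd d) (mk p q) = 2 * p := by
  have : Algebra.trace ℚ (Fd d) (sqrtGen d) = 0 := by
    rw [sqrtGen, PowerBasis.trace_gen_eq_nextCoeff_minpoly, ← sqrtGen, minpoly_sqrtGen hd]
    rw [nextCoeff, natDegree_X_pow_sub_C]
    simp
  rw [mk, map_add, map_smul, this, smul_zero, add_zero, Algebra.trace_algebraMap,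
    (powerBasis d).finrank, powerBasis_dim hd, nsmul_eq_mul, Nat.cast_two]

def conjEmb (hd : ¬ IsSquare d) : Fd d →ₐ[ℚ] ℝ :=
  (powerBasis d).lift (-√d) (by rw [← sqrtGen, minpoly_sqrtGen hd]; simp)

@[simp]
theorem conjEmb_mk (hd : ¬ IsSquare d) (p q : ℚ) : conjEmb hd (mk p q) = p - q * √d := by
  rw [conjEmb, mk, Algebra.smul_def, map_add, map_mul, AlgHom.commutes, AlgHom.commutes, sqrtGen,
    PowerBasis.lift_gen]
  simp
  ring

theorem mk_mul_mk_neg (p q : ℚ) :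
    (mk p q * mk p (-q) : Fd d) = algebraMap ℚ (Fd d) (p ^ 2 - q ^ 2 * d) := by
  apply Subtype.ext
  simp
  linear_combination (-(q : ℝ) ^ 2) * Real.sq_sqrt (Nat.cast_nonneg (α := ℝ) d)

theorem pos_and_sq_mul_lt_sq_of_totPos_mk (hd : ¬ IsSquare d) {p q : ℚ}
    (h : TotPos (mk p q : Fd d)) : 0 < p ∧ q ^ 2 * d < p ^ 2 := by
  have h₁ : 0 < (p : ℝ) + q * √d := by
    rw [← coe_mk]
    exact h (Fd d).val
  have h₂ : 0 < (p : ℝ) - q * √d := by simpa using h (conjEmb hd)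
  have hsqrt := Real.sq_sqrt (Nat.cast_nonneg (α := ℝ) d)
  constructor
  · exact_mod_cast (by linarith : (0 : ℝ) < p)
  · exact_mod_cast (by nlinarith [mul_pos h₁ h₂] : (q : ℝ) ^ 2 * d < p ^ 2)

theorem exists_int_of_isIntegral_mk (hd : Squarefree d) (hd1 : 1 < d) {p q : ℚ}
    (h : IsIntegral ℤ (mk p q : Fd d)) :
    ∃ a b : ℤ, 2 * p = a ∧ 2 * q = b ∧ 4 ∣ a ^ 2 - b ^ 2 * d := by
  have hsq := Nat.not_isSquare_of_squarefree hd hd1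
  obtain ⟨a, ha⟩ := IsIntegrallyClosed.isIntegral_iff.mp (Algebra.isIntegral_trace (L := ℚ) h)
  rw [trace_mk hsq, algebraMap_int_eq, eq_intCast] at ha
  have hconj : IsIntegral ℤ (mk p (-q) : Fd d) := by
    have : (mk p (-q) : Fd d) = algebraMap ℤ (Fd d) a - mk p q := by
      have haR : (a : ℝ) = 2 * p := by exact_mod_cast ha
      apply Subtype.ext
      simp [haR]
      ring
    exact this ▸ isIntegral_algebraMap.sub h
  obtain ⟨m, hm⟩ :=
    exists_intCast_eq_of_isIntegral_algebraMap (mk_mul_mk_neg p q ▸ h.mul hconj)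
  obtain ⟨b, hb⟩ := Rat.exists_intCast_eq_of_mul_sq_eq_intCast (Int.squarefree_natCast.mpr hd)
    (r := 2 * q) (k := a ^ 2 - 4 * m) (by push_cast; rw [ha, ← hm]; ring)
  refine ⟨a, b, ha.symm, hb, m, ?_⟩
  have : (a : ℚ) ^ 2 - b ^ 2 * d = 4 * m := by rw [ha, ← hb, ← hm]; ring
  exact_mod_cast this

end Fd

/-- **Lemma (Statement 6).** If `α ∈ 𝒪_F` is totally positive and `α ∉ ℤ`, then
`tr(α) ≥ √Δ_d`. -/
theorem trace_ge_sqrt_discr_of_totallyPositive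
    (d : ℕ) (hd : Squarefree d) (hd1 : 1 < d)
    (α : Fd d) (hα : α ∈ integralClosure ℤ (Fd d)) (hpos : TotPos α)
    (hint : ∀ n : ℤ, α ≠ (n : Fd d)) :
    Real.sqrt (Delta d) ≤ ((Algebra.trace ℚ (Fd d) α : ℚ) : ℝ) := by
  have hsq := Nat.not_isSquare_of_squarefree hd hd1
  obtain ⟨p, q, rfl⟩ := Fd.exists_mk_eq hsq α
  obtain ⟨a, b, ha, hb, hdvd⟩ := Fd.exists_int_of_isIntegral_mk hd hd1 hα
  obtain ⟨hp, hqp⟩ := Fd.pos_and_sq_mul_lt_sq_of_totPos_mk hsq hpos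
  have hb0 : b ≠ 0 := by
    rintro rfl
    rw [Int.cast_zero, mul_eq_zero, or_iff_right two_ne_zero] at hb
    rw [hb, Fd.mk_zero_right] at hα hint
    obtain ⟨n, rfl⟩ := exists_intCast_eq_of_isIntegral_algebraMap hα
    exact hint n (map_intCast _ n)
  have hle : b ^ 2 * (d : ℤ) ≤ a ^ 2 := by
    have : (b : ℚ) ^ 2 * d ≤ (a : ℚ) ^ 2 := by
      rw [← ha, ← hb]
      nlinarith
    exact_mod_cast this
  have ha0 : (0 : ℝ) ≤ a := by exact_mod_cast (by linarith : (0 : ℚ) ≤ a)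
  rw [Fd.trace_mk hsq, ha, Rat.cast_intCast, Real.sqrt_le_iff]
  exact ⟨ha0, by exact_mod_cast Delta_le_sq hd hb0 hdvd hle⟩
end
end

section
/- Let d > 1 be a squarefree positive integer and F = ℚ(√d), with conjugation x ↦ x̄. If γ ∈ 𝒪_F satisfies 0 ≤ γ̄ < 1 (as a real number under the embedding with √d > 0), then there is a unique a ∈ ℤ such that γ = −⌊a·ω̄_d⌋ + a·ω_d, and moreover 0 ≤ γ − a·√(Δ_d) ≤ 1. -/
noncomputable section

/-!
Writing `γ = p + q√d` with `p q ∈ ℚ`, the integrality of the trace `2p` and of the norm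
`p² - q²d` forces `2q ∈ ℤ` because `d` is squarefree, and a computation modulo `4` then shows
`γ = x + a ω_d` and `γ̄ = x + a ω̄_d` with `x a ∈ ℤ`. Since `γ̄ ∈ [0, 1)`, this gives
`x = -⌊a ω̄_d⌋`, and `γ - a √Δ_d = γ̄` because `√Δ_d = ω_d - ω̄_d`. Uniqueness of `a` is the
irrationality of `ω_d`.
-/

open Polynomial IntermediateField

theorem Nat.not_isSquare_of_squarefree_s14 {d : ℕ} (hd : Squarefree d) (hd1 : 1 < d) :
    ¬IsSquare d := by
  rintro ⟨r, rfl⟩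
  obtain rfl := Nat.isUnit_iff.mp (hd r dvd_rfl)
  omega

theorem Rat.exists_int_eq_of_sq_mul_squarefree {s : ℚ} {d k : ℤ} (hd : Squarefree d)
    (h : s ^ 2 * d = k) : ∃ t : ℤ, s = t := by
  have hden : (s.den : ℤ) ^ 2 ∣ s.num ^ 2 * d := by
    refine ⟨k, ?_⟩
    rw [← Rat.num_div_den s, div_pow] at h
    field_simp at h
    exact_mod_cast h
  have hcop : IsCoprime ((s.den : ℤ) ^ 2) (s.num ^ 2) :=
    (Int.isCoprime_iff_gcd_eq_one.mpr (by simpa [Int.gcd, Nat.coprime_comm] using s.reduced)).pow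
  have hunit := hd _ (sq (s.den : ℤ) ▸ hcop.dvd_of_dvd_mul_left hden)
  exact ⟨s.num, (Rat.coe_int_num_of_den_eq_one (by simpa using Int.isUnit_iff.mp hunit)).symm⟩

theorem Int.emod_two_eq_of_four_dvd_sq_sub_sq_mul {m s d : ℤ} (hd : ¬4 ∣ d)
    (h : 4 ∣ m ^ 2 - s ^ 2 * d) : m % 2 = s % 2 ∧ (d % 4 ≠ 1 → s % 2 = 0) := by
  obtain ⟨u, rfl | rfl⟩ := Int.even_or_odd' m <;> obtain ⟨v, rfl | rfl⟩ := Int.even_or_odd' s <;>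
    ring_nf at h <;> omega

theorem Irrational.eq_of_intCast_add_intCast_mul_eq {ω : ℝ} (hω : Irrational ω) {x y a b : ℤ}
    (h : (x : ℝ) + a * ω = y + b * ω) : a = b := by
  by_contra hab
  apply (hω.intCast_mul (sub_ne_zero.mpr hab)).ne_int (y - x)
  push_cast
  linear_combination h

theorem minpoly_sqrt_natCast {d : ℕ} (hd : ¬IsSquare d) :
    minpoly ℚ (√d : ℝ) = X ^ 2 - C (d : ℚ) := by
  refine (minpoly.eq_of_irreducible_of_monic ?_ ?_ (monic_X_pow_sub_C _ two_ne_zero)).symm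
  · refine X_pow_sub_C_irreducible_of_prime Nat.prime_two fun b hb => hd ?_
    exact Rat.isSquare_natCast_iff.mp ⟨b, by rw [← hb, sq]⟩
  · simp

namespace IntermediateField.AdjoinSimple

variable {K L : Type*} [Field K] [Field L] [Algebra K L] {x : L} {a : K}

theorem exists_eq_algebraMap_add_smul_gen (hx : minpoly K x = X ^ 2 - C a) (y : K⟮x⟯) :
    ∃ p q : K, y = algebraMap K K⟮x⟯ p + q • gen K x := by
  have hint : IsIntegral K x := minpoly.ne_zero_iff.mp (by simp [hx, X_pow_sub_C_ne_zero])
  obtain ⟨f, hf, rfl⟩ := (adjoin.powerBasis hint).exists_eq_aeval y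
  rw [adjoin.powerBasis_dim, hx, natDegree_X_pow_sub_C] at hf
  refine ⟨f.coeff 0, f.coeff 1, ?_⟩
  rw [eq_X_add_C_of_natDegree_le_one (Nat.le_of_lt_succ hf)]
  simp [Algebra.smul_def, add_comm]

theorem trace_algebraMap_add_smul_gen (hx : minpoly K x = X ^ 2 - C a) (p q : K) :
    Algebra.trace K K⟮x⟯ (algebraMap K K⟮x⟯ p + q • gen K x) = 2 * p := by
  have hint : IsIntegral K x := minpoly.ne_zero_iff.mp (by simp [hx, X_pow_sub_C_ne_zero])
  have := adjoin.finiteDimensional hint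
  rw [map_add, map_smul, Algebra.trace_algebraMap, trace_adjoinSimpleGen hint,
    adjoin.finrank hint, hx, natDegree_X_pow_sub_C]
  simp [nextCoeff]

end IntermediateField.AdjoinSimple

section QuadraticField

variable {d : ℕ}

theorem Fd.exists_rat_coords (hd : ¬IsSquare d) (γ : Fd d) :
    ∃ p q : ℚ, (γ : ℝ) = p + q * √d ∧ Algebra.trace ℚ (Fd d) γ = 2 * p := by
  obtain ⟨p, q, rfl⟩ :=
    AdjoinSimple.exists_eq_algebraMap_add_smul_gen (minpoly_sqrt_natCast hd) γ
  refine ⟨p, q, ?_, AdjoinSimple.trace_algebraMap_add_smul_gen (minpoly_sqrt_natCast hd) p q⟩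
  simp [Rat.smul_def]

theorem Fd.exists_int_of_isIntegral {γ : Fd d} (hγ : IsIntegral ℤ γ) {p q : ℚ}
    (hγpq : (γ : ℝ) = p + q * √d) (htr : Algebra.trace ℚ (Fd d) γ = 2 * p) :
    (∃ m : ℤ, (m : ℚ) = 2 * p) ∧ ∃ n : ℤ, (n : ℚ) = p ^ 2 - q ^ 2 * d := by
  have : FiniteDimensional ℚ (Fd d) :=
    adjoin.finiteDimensional ⟨X ^ 2 - C (d : ℚ), monic_X_pow_sub_C _ two_ne_zero, by simp⟩
  obtain ⟨m, hm⟩ := IsIntegrallyClosed.isIntegral_iff.mp (Algebra.isIntegral_trace (L := ℚ) hγ)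
  refine ⟨⟨m, by rw [← htr, ← hm]; simp⟩, ?_⟩
  -- `γ` times its conjugate `tr γ - γ` is an algebraic integer lying in `ℚ`.
  have hnorm : γ * (algebraMap ℚ (Fd d) (Algebra.trace ℚ (Fd d) γ) - γ) =
      algebraMap ℚ (Fd d) (p ^ 2 - q ^ 2 * d) := by
    apply (algebraMap (Fd d) ℝ).injective
    simp only [map_mul, map_sub, ← IsScalarTower.algebraMap_apply, htr]
    simp only [IntermediateField.algebraMap_apply, hγpq, eq_ratCast]
    push_cast
    linear_combination (-(q : ℝ) ^ 2) * Real.sq_sqrt (Nat.cast_nonneg d)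
  have hint : IsIntegral ℤ (algebraMap ℚ (Fd d) (p ^ 2 - q ^ 2 * d)) := by
    rw [← hnorm, ← hm, ← IsScalarTower.algebraMap_apply]
    exact hγ.mul (isIntegral_algebraMap.sub hγ)
  obtain ⟨n, hn⟩ := IsIntegrallyClosed.isIntegral_iff.mp
    ((isIntegral_algebraMap_iff (algebraMap ℚ (Fd d)).injective).mp hint)
  exact ⟨n, by rw [← hn]; simp⟩

theorem exists_int_add_mul_omega_of_rat (hd : Squarefree d) {p q : ℚ}
    (hm : ∃ m : ℤ, (m : ℚ) = 2 * p) (hn : ∃ n : ℤ, (n : ℚ) = p ^ 2 - q ^ 2 * d) :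
    ∃ x a : ℤ,
      (p : ℝ) + q * √d = x + a * omegaR d ∧ (p : ℝ) - q * √d = x + a * omegaConjR d := by
  obtain ⟨m, hm⟩ := hm
  obtain ⟨n, hn⟩ := hn
  obtain ⟨s, hs⟩ := Rat.exists_int_eq_of_sq_mul_squarefree (s := 2 * q) (k := m ^ 2 - 4 * n)
    (Int.squarefree_natCast.mpr hd) (by push_cast; rw [hm, hn]; ring)
  have h4 : 4 ∣ m ^ 2 - s ^ 2 * d := ⟨n, by
    exact_mod_cast (by rw [hm, ← hs, hn]; ring : (m : ℚ) ^ 2 - s ^ 2 * d = 4 * n)⟩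
  have hd4 : ¬(4 : ℤ) ∣ d := fun h => by
    simpa using Nat.isUnit_iff.mp (hd 2 (by exact_mod_cast h))
  obtain ⟨hms, hs2⟩ := Int.emod_two_eq_of_four_dvd_sq_sub_sq_mul hd4 h4
  have hp : (p : ℝ) = m / 2 := by exact_mod_cast (by linarith : p = m / 2)
  have hq : (q : ℝ) = s / 2 := by exact_mod_cast (by linarith : q = s / 2)
  unfold omegaR omegaConjR
  split_ifs with h1
  · obtain ⟨x, hx⟩ : 2 ∣ m - s := by omega
    have hx' : (m : ℝ) = s + 2 * x := by exact_mod_cast (by omega : m = s + 2 * x)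
    exact ⟨x, s, by rw [hp, hq, hx']; ring, by rw [hp, hq, hx']; ring⟩
  · obtain ⟨x, rfl⟩ : 2 ∣ m := by omega
    obtain ⟨a, rfl⟩ : 2 ∣ s := by omega
    exact ⟨x, a, by rw [hp, hq]; push_cast; ring, by rw [hp, hq]; push_cast; ring⟩

theorem Fd.exists_int_add_mul_omega (hd : Squarefree d) (hd1 : 1 < d) {γ : Fd d}
    (hγ : IsIntegral ℤ γ) :
    ∃ x a : ℤ, (γ : ℝ) = x + a * omegaR d ∧ conjR γ = x + a * omegaConjR d := by
  obtain ⟨p, q, hγpq, htr⟩ := Fd.exists_rat_coords (Nat.not_isSquare_of_squarefree_s14 hd hd1) γ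
  obtain ⟨hm, hn⟩ := Fd.exists_int_of_isIntegral hγ hγpq htr
  obtain ⟨x, a, h, h'⟩ := exists_int_add_mul_omega_of_rat hd hm hn
  refine ⟨x, a, hγpq ▸ h, ?_⟩
  rw [conjR, htr, hγpq]
  push_cast
  linear_combination h'

theorem sqrt_Delta_eq_omegaR_sub_omegaConjR : √(Delta d : ℝ) = omegaR d - omegaConjR d := by
  unfold Delta omegaR omegaConjR
  split_ifs
  · ring
  · rw [Nat.cast_mul, Nat.cast_ofNat, Real.sqrt_mul (by norm_num),
      show (4 : ℝ) = 2 ^ 2 by norm_num, Real.sqrt_sq zero_le_two]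
    ring

theorem irrational_omegaR (hd : ¬IsSquare d) : Irrational (omegaR d) := by
  have h := irrational_sqrt_natCast_iff.mpr hd
  unfold omegaR
  split_ifs
  · simpa using (h.ratCast_add 1).div_natCast (m := 2) two_ne_zero
  · exact h

end QuadraticField

/-- **Lemma (Statement 14).** If `γ ∈ 𝒪_F` satisfies `0 ≤ γ̄ < 1`, then there is a
unique `a ∈ ℤ` with `γ = -⌊a·ω̄_d⌋ + a·ω_d`, and moreover
`0 ≤ γ - a·√Δ_d ≤ 1`. -/
theorem exists_unique_floor_rep
    (d : ℕ) (hd : Squarefree d) (hd1 : 1 < d)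
    (γ : Fd d) (hγ : γ ∈ integralClosure ℤ (Fd d))
    (h0 : 0 ≤ conjR γ) (h1 : conjR γ < 1) :
    ∃ a : ℤ,
      ((γ : ℝ) = ((-⌊(a : ℝ) * omegaConjR d⌋ : ℤ) : ℝ) + (a : ℝ) * omegaR d) ∧
      0 ≤ (γ : ℝ) - (a : ℝ) * Real.sqrt (Delta d) ∧
      (γ : ℝ) - (a : ℝ) * Real.sqrt (Delta d) ≤ 1 ∧
      ∀ b : ℤ,
        ((γ : ℝ) = ((-⌊(b : ℝ) * omegaConjR d⌋ : ℤ) : ℝ) + (b : ℝ) * omegaR d) →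
        b = a := by
  obtain ⟨x, a, hγx, hconj⟩ := Fd.exists_int_add_mul_omega hd hd1 hγ
  have hfloor : ⌊(a : ℝ) * omegaConjR d⌋ = -x := by
    rw [show (a : ℝ) * omegaConjR d = conjR γ + (-x : ℤ) by push_cast; linarith,
      Int.floor_add_intCast, Int.floor_eq_zero_iff.mpr ⟨h0, h1⟩, zero_add]
  have hrep : (γ : ℝ) = ((-⌊(a : ℝ) * omegaConjR d⌋ : ℤ) : ℝ) + a * omegaR d := by
    rw [hfloor, neg_neg, hγx]
  have hdiff : (γ : ℝ) - a * √(Delta d) = conjR γ := by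
    rw [sqrt_Delta_eq_omegaR_sub_omegaConjR, hγx, hconj]; ring
  have hω := irrational_omegaR (Nat.not_isSquare_of_squarefree_s14 hd hd1)
  exact ⟨a, hrep, hdiff ▸ h0, hdiff ▸ h1.le,
    fun b hb => hω.eq_of_intCast_add_intCast_mul_eq (hb.symm.trans hrep)⟩
end
end
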